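/- arXiv:2507.13540 — 2 statements merged into one kernel-verified Lean document; each statement's English description precedes it below -/
import Mathlib

section
/- Let n, c, d be positive integers, let x : [n] → [c] be a token sequence, let V = {v_k}_{k=1}^n be a good sequence in ℝ^d converging to latent representations Z = {z_x}_{x∈[c]} with parameter γ > 0, and let A ∈ ℝ^{n×n} be a nice attention map with parameter ψ that reflects a function f : [c] → [c] (i.e. a_{k,j} > 0 implies x_j = f(x_k)). Then the sequence AV is a good sequence converging to the latent representations Z' = {z_{f(x)}}_{x∈[c]} with parameter 2γψ + c(γ + 2N), where N = max_{x∈[c]} ‖z_x‖. -/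
/-!
Since `A` reflects `f`, row `k` of `A` only averages positions carrying the token `f (x k)`, so
`(A V)_k - z (f (x k))` is the `A`-average of the errors `v j - z (x j)`, of norm at most
`∑ j ≤ k, a_{k,j} γ / √j`. The weights `γ / √j` decrease, so by Abel summation this sum only grows
when the cumulative weights `∑ i ≤ j, a_{k,i}` are replaced by their upper bound `ψ j / k`, giving
`(ψ γ / k) ∑ j ≤ k, 1 / √j ≤ 2 γ ψ / √k`.
-/

open Finset

lemma sum_smul_eq_of_ne_zero_imp {ι E : Type*} [AddCommGroup E] [Module ℝ E] {s : Finset ι}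
    {w : ι → ℝ} {u : ι → E} {u₀ : E} (hw : ∑ i ∈ s, w i = 1)
    (hu : ∀ i ∈ s, w i ≠ 0 → u i = u₀) :
    ∑ i ∈ s, w i • u i = u₀ := by
  calc ∑ i ∈ s, w i • u i = ∑ i ∈ s, w i • u₀ := by
        refine sum_congr rfl fun i hi => ?_
        by_cases hwi : w i = 0
        · simp [hwi]
        · rw [hu i hi hwi]
    _ = u₀ := by rw [← sum_smul, hw, one_smul]

lemma sum_mul_le_sum_mul_of_partial_sum_le {a b g : ℕ → ℝ} {k : ℕ}
    (hg : AntitoneOn g (Set.Icc 1 k)) (hgk : 0 ≤ g k)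
    (hab : ∀ j ∈ Icc 1 k, ∑ i ∈ Icc 1 j, a i ≤ ∑ i ∈ Icc 1 j, b i) :
    ∑ j ∈ Icc 1 k, a j * g j ≤ ∑ j ∈ Icc 1 k, b j * g j := by
  set D : ℕ → ℝ := fun j => ∑ i ∈ Icc 1 j, (a i - b i)
  have hD : ∀ j ≤ k, D j ≤ 0 := by
    intro j hj
    rcases Nat.eq_zero_or_pos j with rfl | hj1
    · simp [D]
    · simpa [D, sum_sub_distrib] using hab j (mem_Icc.mpr ⟨hj1, hj⟩)
  have abel : ∀ m ≤ k, ∑ j ∈ Icc 1 m, (a j - b j) * g j ≤ D m * g m := by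
    intro m
    induction m with
    | zero => simp [D]
    | succ m ih =>
      intro hm
      have hDsucc : D (m + 1) = D m + (a (m + 1) - b (m + 1)) := sum_Icc_succ_top (by omega) _
      rw [sum_Icc_succ_top (by omega), hDsucc, add_mul]
      gcongr ?_ + _
      refine (ih (by omega)).trans ?_
      rcases Nat.eq_zero_or_pos m with rfl | hm1
      · simp [D]
      · exact mul_le_mul_of_nonpos_left
          (hg ⟨hm1, by omega⟩ ⟨by omega, hm⟩ (Nat.le_succ m)) (hD m (by omega))
  have := (abel k le_rfl).trans (mul_nonpos_of_nonpos_of_nonneg (hD k le_rfl) hgk)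
  simpa [sub_mul, sum_sub_distrib] using this

lemma sum_inv_sqrt_le (k : ℕ) : ∑ j ∈ Icc 1 k, (√j)⁻¹ ≤ 2 * √k := by
  induction k with
  | zero => simp
  | succ m ih =>
    rw [sum_Icc_succ_top (by omega)]
    have hm1 : 0 < √(m + 1 : ℝ) := Real.sqrt_pos.mpr (by positivity)
    have hmono : √(m : ℝ) ≤ √(m + 1 : ℝ) := Real.sqrt_le_sqrt (by linarith)
    -- `1 = (√(m+1) - √m)(√(m+1) + √m) ≤ 2 √(m+1) (√(m+1) - √m)`
    have step : (√(m + 1 : ℝ))⁻¹ ≤ 2 * (√(m + 1 : ℝ) - √m) := by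
      rw [inv_le_iff_one_le_mul₀' hm1]
      nlinarith [Real.sq_sqrt (Nat.cast_nonneg (α := ℝ) m),
        Real.sq_sqrt (by positivity : (0 : ℝ) ≤ m + 1), Real.sqrt_nonneg (m : ℝ)]
    push_cast
    linarith

lemma sum_mul_div_sqrt_le_of_partial_sum_le {w : ℕ → ℝ} {k : ℕ} {γ ψ : ℝ}
    (hγ : 0 ≤ γ) (hψ : 0 ≤ ψ) (hw : ∀ j ∈ Icc 1 k, ∑ i ∈ Icc 1 j, w i ≤ ψ * j / k) :
    ∑ j ∈ Icc 1 k, w j * (γ / √j) ≤ 2 * γ * ψ / √k := by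
  have hanti : AntitoneOn (fun j : ℕ => γ / √j) (Set.Icc 1 k) := by
    intro i hi j _ hij
    have hi0 : (0 : ℝ) < √i := Real.sqrt_pos.mpr (by exact_mod_cast hi.1)
    exact div_le_div_of_nonneg_left hγ hi0 (Real.sqrt_le_sqrt (by exact_mod_cast hij))
  calc ∑ j ∈ Icc 1 k, w j * (γ / √j) ≤ ∑ j ∈ Icc 1 k, ψ / k * (γ / √j) := by
        refine sum_mul_le_sum_mul_of_partial_sum_le hanti (by positivity) fun j hj => ?_
        simpa [mul_div_right_comm, mul_comm] using hw j hj
    _ = ψ * γ / k * ∑ j ∈ Icc 1 k, (√j)⁻¹ := by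
        rw [mul_sum]; exact sum_congr rfl fun j _ => by ring
    _ ≤ ψ * γ / k * (2 * √k) := by gcongr; exact sum_inv_sqrt_le k
    _ = 2 * γ * ψ / √k := by
        rcases Nat.eq_zero_or_pos k with rfl | hk
        · simp
        have hsk : 0 < √(k : ℝ) := Real.sqrt_pos.mpr (by exact_mod_cast hk)
        field_simp
        rw [Real.sq_sqrt (Nat.cast_nonneg k)]

theorem attention_reflecting_function_good_sequence_general
    (n c d : ℕ) (hc : 1 ≤ c)
    (x : ℕ → ℕ)
    (v z : ℕ → EuclideanSpace ℝ (Fin d)) (γ ψ : ℝ) (hγ : 0 < γ) (hψ : 0 < ψ)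
    (A : ℕ → ℕ → ℝ)
    (hA_nonneg : ∀ k j, 0 ≤ A k j)
    (hA_row : ∀ k ∈ Icc 1 n, ∑ j ∈ Icc 1 k, A k j = 1)
    (hA_nice : ∀ k ∈ Icc 1 n, ∀ j ∈ Icc 1 k,
      ∑ i ∈ Icc 1 j, A k i ≤ ψ * j / k)
    (f : ℕ → ℕ)
    (hreflect : ∀ k ∈ Icc 1 n, ∀ j ∈ Icc 1 k, 0 < A k j → x j = f (x k))
    (hgood : ∀ k ∈ Icc 1 n, ‖v k - z (x k)‖ ≤ γ / Real.sqrt k) :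
    ∀ k ∈ Icc 1 n,
      ‖(∑ j ∈ Icc 1 k, A k j • v j) - z (f (x k))‖ ≤
        (2 * γ * ψ +
            c * (γ + 2 * ((Icc 1 c).sup' (Finset.nonempty_Icc.mpr hc)
              (fun y => ‖z y‖)))) / Real.sqrt k := by
  intro k hk
  have hN : 0 ≤ (Icc 1 c).sup' (nonempty_Icc.mpr hc) fun y => ‖z y‖ :=
    (norm_nonneg _).trans (le_sup' (fun y => ‖z y‖) (left_mem_Icc.mpr hc))
  have hz : ∑ j ∈ Icc 1 k, A k j • z (x j) = z (f (x k)) :=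
    sum_smul_eq_of_ne_zero_imp (hA_row k hk) fun j hj hA =>
      congrArg z (hreflect k hk j hj ((hA_nonneg k j).lt_of_ne' hA))
  calc ‖(∑ j ∈ Icc 1 k, A k j • v j) - z (f (x k))‖
      = ‖∑ j ∈ Icc 1 k, A k j • (v j - z (x j))‖ := by
        simp_rw [smul_sub, sum_sub_distrib, hz]
    _ ≤ ∑ j ∈ Icc 1 k, A k j * (γ / √j) := by
        refine (norm_sum_le _ _).trans (sum_le_sum fun j hj => ?_)
        rw [norm_smul, Real.norm_of_nonneg (hA_nonneg k j)]
        have hjn : j ∈ Icc 1 n :=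
          mem_Icc.mpr ⟨(mem_Icc.mp hj).1, (mem_Icc.mp hj).2.trans (mem_Icc.mp hk).2⟩
        exact mul_le_mul_of_nonneg_left (hgood j hjn) (hA_nonneg k j)
    _ ≤ 2 * γ * ψ / √k := sum_mul_div_sqrt_le_of_partial_sum_le hγ.le hψ.le (hA_nice k hk)
    _ ≤ _ := by gcongr; exact le_add_of_nonneg_right (by positivity)

/-- If `V = {v k}` is a good sequence converging to latent
representations `z` with parameter `γ`, and `A` is a nice attention map with
parameter `ψ` reflecting a function `f : [c] → [c]` (i.e. `A k j > 0` implies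
`x j = f (x k)`), then `A V` is a good sequence converging to
`{z (f x)}_{x ∈ [c]}` with parameter `2γψ + c(γ + 2N)`, where
`N = max_{x ∈ [c]} ‖z x‖`. -/
theorem attention_reflecting_function_good_sequence
    (n c d : ℕ) (hn : 1 ≤ n) (hc : 1 ≤ c) (hd : 1 ≤ d)
    (x : ℕ → ℕ) (hx : ∀ k ∈ Icc 1 n, x k ∈ Icc 1 c)
    (v z : ℕ → EuclideanSpace ℝ (Fin d)) (γ ψ : ℝ) (hγ : 0 < γ) (hψ : 0 < ψ)
    (A : ℕ → ℕ → ℝ)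
    (hA_nonneg : ∀ k j, 0 ≤ A k j)
    (hA_tri : ∀ k j, k < j → A k j = 0)
    (hA_row : ∀ k ∈ Icc 1 n, ∑ j ∈ Icc 1 k, A k j = 1)
    (hA_nice : ∀ k ∈ Icc 1 n, ∀ j ∈ Icc 1 k,
      ∑ i ∈ Icc 1 j, A k i ≤ ψ * j / k)
    (f : ℕ → ℕ) (hf : ∀ y ∈ Icc 1 c, f y ∈ Icc 1 c)
    (hreflect : ∀ k ∈ Icc 1 n, ∀ j ∈ Icc 1 k, 0 < A k j → x j = f (x k))
    (hgood : ∀ k ∈ Icc 1 n, ‖v k - z (x k)‖ ≤ γ / Real.sqrt k) :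
    ∀ k ∈ Icc 1 n,
      ‖(∑ j ∈ Icc 1 k, A k j • v j) - z (f (x k))‖ ≤
        (2 * γ * ψ +
            c * (γ + 2 * ((Icc 1 c).sup' (Finset.nonempty_Icc.mpr hc)
              (fun y => ‖z y‖)))) / Real.sqrt k :=
  attention_reflecting_function_good_sequence_general n c d hc x v z γ ψ hγ hψ A hA_nonneg hA_row
    hA_nice f hreflect hgood
end

section
/- Let x : [n] → [c] be a token sequence with x_k = k for all k ≤ c (the first c tokens traverse the vocabulary), let f : [c] → 2^{[c]} satisfy f(x) ≠ ∅ for all x, let V = {v_k}_{k=1}^n be a good sequence in ℝ^d converging to Z = {z_x}_{x∈[c]} with parameter γ, and let A be a nice attention map with parameter ψ that reflects f. Set N = max_{y∈[c]} ‖z_y‖, F_{y,k} = #{j ≤ k : x_j = y}, R_k = Σ_{y∈f(x_k)} F_{y,k}, and z̃_k = Σ_{y∈f(x_k)} (F_{y,k}/R_k)·z_y. Then for every k with c < k ≤ n, ‖(AV)_k − z̃_k‖ ≤ (2ψγ + Ncψ)/√k. -/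
open Finset

/-! Split `(AV)_k - z̃_k` as `∑_j a_{k,j} (v_j - z_{x_j})` plus
`∑_{y ∈ f(x_k)} (∑_{x_j = y} a_{k,j} - F_{y,k}/R_k) z_y`; the regrouping by tokens is possible
because, by reflection (i), `a_{k,j}` vanishes unless `x_j ∈ f(x_k)`. By (ii) each coefficient of
the second sum is at most `ψ/√k`, which gives `Ncψ/√k`. In the first, `‖v_j - z_{x_j}‖ ≤ γ/√j`,
and since `1/√j` decreases, Abel summation against the niceness bound `∑_{i≤j} a_{k,i} ≤ ψj/k`
gives `∑_j a_{k,j}/√j ≤ (ψ/k) ∑_{j≤k} 1/√j ≤ 2ψ/√k`. -/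

theorem sum_Icc_one_eq_sum_range {M : Type*} [AddCommMonoid M] (h : ℕ → M) (k : ℕ) :
    ∑ j ∈ Icc 1 k, h j = ∑ i ∈ range k, h (i + 1) := by
  rw [← Ico_add_one_right_eq_Icc, sum_Ico_eq_sum_range, add_tsub_cancel_right]
  simp only [add_comm]

theorem sum_range_mul_le_of_partial_sums_le {a b g : ℕ → ℝ} {n : ℕ} (hg : Antitone g)
    (hg0 : ∀ i, 0 ≤ g i) (hab : ∀ m ≤ n, ∑ i ∈ range m, a i ≤ ∑ i ∈ range m, b i) :
    ∑ i ∈ range n, a i * g i ≤ ∑ i ∈ range n, b i * g i := by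
  set D : ℕ → ℝ := fun m => ∑ i ∈ range m, (a i - b i)
  have hD : ∀ m ≤ n, D m ≤ 0 := fun m hm => by
    simpa only [D, sum_sub_distrib, sub_nonpos] using hab m hm
  have hparts := sum_range_by_parts g (fun i => a i - b i) n
  simp only [smul_eq_mul] at hparts
  suffices ∑ i ∈ range n, g i * (a i - b i) ≤ 0 by
    simpa only [mul_sub, sum_sub_distrib, sub_nonpos, mul_comm] using this
  rw [hparts, sub_nonpos]
  calc g (n - 1) * D n ≤ 0 := mul_nonpos_of_nonneg_of_nonpos (hg0 _) (hD n le_rfl)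
    _ ≤ ∑ i ∈ range (n - 1), (g (i + 1) - g i) * D (i + 1) := by
      refine sum_nonneg fun i hi => mul_nonneg_of_nonpos_of_nonpos ?_ (hD _ ?_)
      · exact sub_nonpos.mpr (hg (Nat.le_succ i))
      · have := mem_range.mp hi; omega

theorem sum_range_inv_sqrt_succ_le (k : ℕ) :
    ∑ i ∈ range k, 1 / Real.sqrt (i + 1) ≤ 2 * Real.sqrt k := by
  induction k with
  | zero => simp
  | succ k ih =>
    rw [sum_range_succ]
    have hpos : 0 < Real.sqrt ((k : ℝ) + 1) := Real.sqrt_pos.mpr (by positivity)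
    -- `2 (√(k+1) - √k) = 2 / (√(k+1) + √k) ≥ 1 / √(k+1)`
    have hstep : 1 / Real.sqrt ((k : ℝ) + 1)
        ≤ 2 * Real.sqrt ((k : ℝ) + 1) - 2 * Real.sqrt k := by
      rw [div_le_iff₀ hpos]
      nlinarith [Real.sq_sqrt (show (0:ℝ) ≤ k + 1 by positivity),
        Real.sq_sqrt (show (0:ℝ) ≤ k by positivity),
        Real.sqrt_nonneg (k : ℝ), sq_nonneg (Real.sqrt ((k : ℝ) + 1) - Real.sqrt k)]
    push_cast
    linarith

theorem sum_Icc_div_sqrt_le {a : ℕ → ℝ} {k : ℕ} {ψ : ℝ} (hψ : 0 ≤ ψ)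
    (ha : ∀ j ∈ Icc 1 k, ∑ i ∈ Icc 1 j, a i ≤ ψ * j / k) :
    ∑ j ∈ Icc 1 k, a j / Real.sqrt j ≤ 2 * ψ / Real.sqrt k := by
  have hpartial : ∀ m ≤ k, ∑ i ∈ range m, a (i + 1) ≤ ∑ _i ∈ range m, ψ / k := by
    rintro (_ | m) hm
    · simp
    · rw [← sum_Icc_one_eq_sum_range, sum_const, card_range, nsmul_eq_mul, mul_div,
        mul_comm]
      exact_mod_cast ha (m + 1) (mem_Icc.mpr ⟨by omega, hm⟩)
  have hanti : Antitone fun i : ℕ => 1 / Real.sqrt (i + 1) := fun i j hij => by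
    dsimp only
    gcongr
  calc ∑ j ∈ Icc 1 k, a j / Real.sqrt j
      = ∑ i ∈ range k, a (i + 1) * (1 / Real.sqrt (i + 1)) := by
        rw [sum_Icc_one_eq_sum_range]
        push_cast
        simp only [mul_one_div]
    _ ≤ ∑ i ∈ range k, ψ / k * (1 / Real.sqrt (i + 1)) :=
        sum_range_mul_le_of_partial_sums_le hanti (fun _ => by positivity) hpartial
    _ ≤ ψ / k * (2 * Real.sqrt k) := by
        rw [← mul_sum]
        exact mul_le_mul_of_nonneg_left (sum_range_inv_sqrt_succ_le k) (by positivity)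
    _ = 2 * ψ / Real.sqrt k := by
        rcases Nat.eq_zero_or_pos k with rfl | hk
        · simp
        have hsq := Real.mul_self_sqrt (Nat.cast_nonneg (α := ℝ) k)
        have : Real.sqrt k ≠ 0 := (Real.sqrt_pos.mpr (by exact_mod_cast hk)).ne'
        field_simp
        linear_combination ψ * hsq

theorem sum_smul_comp_eq_sum_fiberwise {ι κ R E : Type*} [DecidableEq κ] [Semiring R]
    [AddCommMonoid E] [Module R E] {s : Finset ι} {t : Finset κ} {g : ι → κ} {w : ι → R}
    (z : κ → E) (hw : ∀ i ∈ s, g i ∉ t → w i = 0) :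
    ∑ i ∈ s, w i • z (g i) = ∑ j ∈ t, (∑ i ∈ s with g i = j, w i) • z j :=
  calc ∑ i ∈ s, w i • z (g i)
      = ∑ i ∈ s with g i ∈ t, w i • z (g i) := by
        refine (sum_filter_of_ne fun i hi hne => ?_).symm
        by_contra hgi
        simp [hw i hi hgi] at hne
    _ = ∑ j ∈ t, ∑ i ∈ s with g i = j, w i • z (g i) :=
        (sum_fiberwise_eq_sum_filter s t g _).symm
    _ = ∑ j ∈ t, (∑ i ∈ s with g i = j, w i) • z j := by
        refine sum_congr rfl fun j _ => ?_
        rw [sum_smul]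
        exact sum_congr rfl fun i hi => by rw [(mem_filter.mp hi).2]

theorem norm_sum_smul_le_of_norm_le_div_sqrt {E : Type*} [SeminormedAddCommGroup E]
    [NormedSpace ℝ E] {a : ℕ → ℝ} {e : ℕ → E} {k : ℕ} {ψ γ : ℝ} (hψ : 0 ≤ ψ) (hγ : 0 ≤ γ)
    (ha0 : ∀ j ∈ Icc 1 k, 0 ≤ a j) (ha : ∀ j ∈ Icc 1 k, ∑ i ∈ Icc 1 j, a i ≤ ψ * j / k)
    (he : ∀ j ∈ Icc 1 k, ‖e j‖ ≤ γ / Real.sqrt j) :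
    ‖∑ j ∈ Icc 1 k, a j • e j‖ ≤ 2 * ψ * γ / Real.sqrt k :=
  calc ‖∑ j ∈ Icc 1 k, a j • e j‖
      ≤ ∑ j ∈ Icc 1 k, a j * ‖e j‖ := by
        refine (norm_sum_le _ _).trans_eq (sum_congr rfl fun j hj => ?_)
        rw [norm_smul, Real.norm_of_nonneg (ha0 j hj)]
    _ ≤ ∑ j ∈ Icc 1 k, γ * (a j / Real.sqrt j) := by
        refine sum_le_sum fun j hj => ?_
        rw [mul_div_left_comm]
        exact mul_le_mul_of_nonneg_left (he j hj) (ha0 j hj)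
    _ ≤ γ * (2 * ψ / Real.sqrt k) := by
        rw [← mul_sum]
        exact mul_le_mul_of_nonneg_left (sum_Icc_div_sqrt_le hψ ha) hγ
    _ = 2 * ψ * γ / Real.sqrt k := by ring

theorem norm_sum_smul_le_card_mul {κ E : Type*} [SeminormedAddCommGroup E] [NormedSpace ℝ E]
    {t : Finset κ} {w : κ → ℝ} {z : κ → E} {ε N : ℝ} (hw : ∀ y ∈ t, |w y| ≤ ε)
    (hz : ∀ y ∈ t, ‖z y‖ ≤ N) :
    ‖∑ y ∈ t, w y • z y‖ ≤ #t * (ε * N) := by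
  rw [← nsmul_eq_mul]
  refine (norm_sum_le _ _).trans (sum_le_card_nsmul _ _ _ fun y hy => ?_)
  rw [norm_smul, Real.norm_eq_abs]
  exact mul_le_mul (hw y hy) (hz y hy) (norm_nonneg _) ((abs_nonneg _).trans (hw y hy))

theorem attention_reflecting_setvalued_frequency_bound_general
    (n c d : ℕ) (hc : 1 ≤ c)
    (x : ℕ → ℕ) (hx : ∀ k ∈ Icc 1 n, x k ∈ Icc 1 c)
    (f : ℕ → Finset ℕ)
    (hf_sub : ∀ y ∈ Icc 1 c, f y ⊆ Icc 1 c)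
    (v z : ℕ → EuclideanSpace ℝ (Fin d)) (γ ψ N : ℝ) (hγ : 0 < γ) (hψ : 0 < ψ)
    (hN : N = (Icc 1 c).sup' (Finset.nonempty_Icc.mpr hc) (fun y => ‖z y‖))
    (A : ℕ → ℕ → ℝ)
    (hA_nonneg : ∀ k j, 0 ≤ A k j)
    (hA_nice : ∀ k ∈ Icc 1 n, ∀ j ∈ Icc 1 k,
      ∑ i ∈ Icc 1 j, A k i ≤ ψ * j / k)
    (hrefl1 : ∀ k ∈ Icc 1 n, c < k → ∀ j ∈ Icc 1 k, 0 < A k j → x j ∈ f (x k))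
    (hrefl2 : ∀ k ∈ Icc 1 n, ∀ y ∈ f (x k),
      |(∑ j ∈ (Icc 1 k).filter (fun j => x j = y), A k j) -
          (((Icc 1 k).filter (fun j => x j = y)).card : ℝ) /
            ∑ y' ∈ f (x k), (((Icc 1 k).filter (fun j => x j = y')).card : ℝ)|
        ≤ ψ / Real.sqrt k)
    (hgood : ∀ k ∈ Icc 1 n, ‖v k - z (x k)‖ ≤ γ / Real.sqrt k) :
    ∀ k, c < k → k ≤ n →
      ‖(∑ j ∈ Icc 1 k, A k j • v j) -
          ∑ y ∈ f (x k),
            ((((Icc 1 k).filter (fun j => x j = y)).card : ℝ) /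
              (∑ y' ∈ f (x k),
                (((Icc 1 k).filter (fun j => x j = y')).card : ℝ))) • z y‖ ≤
        (2 * ψ * γ + N * c * ψ) / Real.sqrt k := by
  intro k hck hkn
  have hk : k ∈ Icc 1 n := mem_Icc.mpr ⟨hc.trans hck.le, hkn⟩
  have hT : f (x k) ⊆ Icc 1 c := hf_sub _ (hx k hk)
  have hN0 : 0 ≤ N := hN ▸ le_sup'_of_le _ (left_mem_Icc.mpr hc) (norm_nonneg _)
  have hcard : (#(f (x k)) : ℝ) ≤ c := by
    exact_mod_cast (card_le_card hT).trans (Nat.card_Icc 1 c).le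
  have hfiber : ∑ j ∈ Icc 1 k, A k j • z (x j)
      = ∑ y ∈ f (x k), (∑ j ∈ Icc 1 k with x j = y, A k j) • z y :=
    sum_smul_comp_eq_sum_fiberwise z fun j hj hxj => by_contra fun hA =>
      hxj (hrefl1 k hk hck j hj ((hA_nonneg k j).lt_of_ne' hA))
  calc _ = ‖∑ j ∈ Icc 1 k, A k j • (v j - z (x j)) + ∑ y ∈ f (x k),
          ((∑ j ∈ Icc 1 k with x j = y, A k j) - (#{j ∈ Icc 1 k | x j = y} : ℝ) /
            ∑ y' ∈ f (x k), (#{j ∈ Icc 1 k | x j = y'} : ℝ)) • z y‖ := by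
        simp only [smul_sub, sub_smul, sum_sub_distrib, hfiber]
        abel_nf
    _ ≤ 2 * ψ * γ / Real.sqrt k + #(f (x k)) * (ψ / Real.sqrt k * N) :=
        (norm_add_le _ _).trans <| add_le_add
          (norm_sum_smul_le_of_norm_le_div_sqrt hψ.le hγ.le (fun j _ => hA_nonneg k j)
            (hA_nice k hk) fun j hj => hgood j (Icc_subset_Icc_right hkn hj))
          (norm_sum_smul_le_card_mul (hrefl2 k hk) fun y hy =>
            hN ▸ le_sup' (fun y => ‖z y‖) (hT hy))
    _ ≤ 2 * ψ * γ / Real.sqrt k + c * (ψ / Real.sqrt k * N) := by gcongr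
    _ = (2 * ψ * γ + N * c * ψ) / Real.sqrt k := by ring

/-- Applying a nice attention map reflecting a set-valued
function `f` to a good sequence: for `c < k ≤ n`, the output
`(A V)_k = ∑_{j=1}^k a_{k,j} v_j` is within `(2ψγ + Ncψ)/√k` of the
frequency-weighted combination `z̃_k = ∑_{y ∈ f(x_k)} (F_{y,k}/R_k) z_y`. -/
theorem attention_reflecting_setvalued_frequency_bound
    (n c d : ℕ) (hc : 1 ≤ c) (hcn : c ≤ n)
    (x : ℕ → ℕ) (hx : ∀ k ∈ Icc 1 n, x k ∈ Icc 1 c)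
    (hx_init : ∀ k ∈ Icc 1 c, x k = k)
    (f : ℕ → Finset ℕ)
    (hf_sub : ∀ y ∈ Icc 1 c, f y ⊆ Icc 1 c)
    (hf_ne : ∀ y ∈ Icc 1 c, (f y).Nonempty)
    (v z : ℕ → EuclideanSpace ℝ (Fin d)) (γ ψ N : ℝ) (hγ : 0 < γ) (hψ : 0 < ψ)
    (hN : N = (Icc 1 c).sup' (Finset.nonempty_Icc.mpr hc) (fun y => ‖z y‖))
    (A : ℕ → ℕ → ℝ)
    (hA_nonneg : ∀ k j, 0 ≤ A k j)
    (hA_tri : ∀ k j, k < j → A k j = 0)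
    (hA_row : ∀ k ∈ Icc 1 n, ∑ j ∈ Icc 1 k, A k j = 1)
    (hA_nice : ∀ k ∈ Icc 1 n, ∀ j ∈ Icc 1 k,
      ∑ i ∈ Icc 1 j, A k i ≤ ψ * j / k)
    (hrefl1 : ∀ k ∈ Icc 1 n, c < k → ∀ j ∈ Icc 1 k, 0 < A k j → x j ∈ f (x k))
    (hrefl2 : ∀ k ∈ Icc 1 n, ∀ y ∈ f (x k),
      |(∑ j ∈ (Icc 1 k).filter (fun j => x j = y), A k j) -
          (((Icc 1 k).filter (fun j => x j = y)).card : ℝ) /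
            ∑ y' ∈ f (x k), (((Icc 1 k).filter (fun j => x j = y')).card : ℝ)|
        ≤ ψ / Real.sqrt k)
    (hgood : ∀ k ∈ Icc 1 n, ‖v k - z (x k)‖ ≤ γ / Real.sqrt k) :
    ∀ k, c < k → k ≤ n →
      ‖(∑ j ∈ Icc 1 k, A k j • v j) -
          ∑ y ∈ f (x k),
            ((((Icc 1 k).filter (fun j => x j = y)).card : ℝ) /
              (∑ y' ∈ f (x k),
                (((Icc 1 k).filter (fun j => x j = y')).card : ℝ))) • z y‖ ≤
        (2 * ψ * γ + N * c * ψ) / Real.sqrt k :=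
  attention_reflecting_setvalued_frequency_bound_general n c d hc x hx f hf_sub v z γ ψ N hγ hψ hN A
    hA_nonneg hA_nice hrefl1 hrefl2 hgood
end
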